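/- Let A be a ⊖-algebra. For every prime ideal x of A there exists a prime ideal y of A such that (x, y) ∈ dom(+) and x + y = x. -/
import Mathlib


class OminusAlgebra (A : Type*) extends DistribLattice A, BoundedOrder A where
  ominus : A → A → A
  inf_ominus : ∀ a b c : A, ominus (a ⊓ b) c = ominus a c ⊓ ominus b c
  sup_ominus : ∀ a b c : A, ominus (a ⊔ b) c = ominus a c ⊔ ominus b c
  ominus_inf : ∀ a b c : A, ominus a (b ⊓ c) = ominus a b ⊔ ominus a c
  ominus_sup : ∀ a b c : A, ominus a (b ⊔ c) = ominus a b ⊓ ominus a c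
  bot_ominus : ∀ a : A, ominus ⊥ a = ⊥
  ominus_top : ∀ a : A, ominus a ⊤ = ⊥
  ominus_bot : ∀ a : A, ominus a ⊥ = a

infixl:65 " ⊖ " => OminusAlgebra.ominus

variable {A : Type*} [OminusAlgebra A]

def oneg (a : A) : A := ⊤ ⊖ a

def oplus (a b : A) : A := oneg (oneg a ⊖ b)

def IsPrimeIdeal (x : Set A) : Prop :=
  x.Nonempty ∧ (∀ a b : A, a ≤ b → b ∈ x → a ∈ x) ∧
    (∀ a b : A, a ∈ x → b ∈ x → a ⊔ b ∈ x) ∧ x ≠ Set.univ ∧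
    (∀ a b : A, a ⊓ b ∈ x → a ∈ x ∨ b ∈ x)

def ineg (x : Set A) : Set A := {a | oneg a ∉ x}

def domPlus (x y : Set A) : Prop := y ⊆ ineg x

def pplus (x y : Set A) : Set A := {a | ∃ b ∈ y, a ⊖ b ∈ x}

def domStar (x y : Set A) : Prop := ¬ ineg x ⊆ y

def pstar (x y : Set A) : Set A := {a | ∀ b ∉ y, a ⊖ b ∈ x}

lemma ominus_mono_left {a a' b : A} (h : a ≤ a') : a ⊖ b ≤ a' ⊖ b := by
  have : a' ⊖ b = (a ⊔ a') ⊖ b := by rw [sup_eq_right.mpr h]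
  rw [this, OminusAlgebra.sup_ominus]
  exact le_sup_left

lemma ominus_anti_right {a b b' : A} (h : b ≤ b') : a ⊖ b' ≤ a ⊖ b := by
  have : a ⊖ b' = a ⊖ (b ⊔ b') := by rw [sup_eq_right.mpr h]
  rw [this, OminusAlgebra.ominus_sup]
  exact inf_le_left

theorem stmt8 {A : Type*} [OminusAlgebra A] (x : Set A) (hx : IsPrimeIdeal x) :
    ∃ y : Set A, IsPrimeIdeal y ∧ domPlus x y ∧ pplus x y = x := by
  obtain ⟨hne, hdc, hjoin, hproper, hprime⟩ := hx
  have hbotx : (⊥ : A) ∈ x := by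
    obtain ⟨a, ha⟩ := hne
    exact hdc ⊥ a bot_le ha
  have htopx : (⊤ : A) ∉ x := by
    intro h
    exact hproper (Set.eq_univ_iff_forall.mpr fun a => hdc a ⊤ le_top h)
  -- the "bad" filter
  set F : Set A := {b | ∃ a, a ∉ x ∧ a ⊖ b ∈ x} with hFdef
  have htopF : (⊤ : A) ∈ F := ⟨⊤, htopx, by rw [OminusAlgebra.ominus_top]; exact hbotx⟩
  have hbotF : (⊥ : A) ∉ F := by
    rintro ⟨a, ha, hab⟩
    rw [OminusAlgebra.ominus_bot] at hab
    exact ha hab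
  have hFup : ∀ {b c : A}, b ≤ c → b ∈ F → c ∈ F := by
    rintro b c hbc ⟨a, ha, hab⟩
    exact ⟨a, ha, hdc _ _ (ominus_anti_right hbc) hab⟩
  have hFinf : ∀ {b c : A}, b ∈ F → c ∈ F → b ⊓ c ∈ F := by
    rintro b c ⟨a, ha, hab⟩ ⟨a', ha', hab'⟩
    refine ⟨a ⊓ a', fun h => (hprime a a' h).elim ha ha', ?_⟩
    rw [OminusAlgebra.ominus_inf]
    exact hjoin _ _ (hdc _ _ (ominus_mono_left inf_le_left) hab)
      (hdc _ _ (ominus_mono_left inf_le_right) hab')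
  have hF : Order.IsPFilter F :=
    Order.IsPFilter.of_def ⟨⊤, htopF⟩
      (fun b hb c hc => ⟨b ⊓ c, hFinf hb hc, inf_le_left, inf_le_right⟩)
      (fun h hb => hFup h hb)
  have hFcoe : (hF.toPFilter : Set A) = F := rfl
  have hdisjFI : Disjoint (hF.toPFilter : Set A)
      ((Order.Ideal.principal (⊥ : A)) : Set A) := by
    rw [Set.disjoint_left, hFcoe]
    intro b hb hb'
    have : b = ⊥ := le_bot_iff.mp hb'
    rw [this] at hb
    exact hbotF hb
  obtain ⟨J, hJprime, hIJ, hdisj⟩ :=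
    DistribLattice.prime_ideal_of_disjoint_filter_ideal hdisjFI
  rw [hFcoe] at hdisj
  have hFJ : ∀ {b : A}, b ∈ F → b ∉ (J : Set A) := fun hb => Set.disjoint_left.mp hdisj hb
  refine ⟨(J : Set A), ⟨⟨⊥, J.bot_mem⟩, fun a b hab hb => J.lower hab hb,
    fun a b ha hb => Order.Ideal.sup_mem ha hb, ?_, fun a b h => hJprime.mem_or_mem h⟩,
    ?_, ?_⟩
  · intro h
    exact hFJ htopF (h ▸ Set.mem_univ ⊤)
  · intro b hb
    intro hnb
    exact hFJ ⟨⊤, htopx, hnb⟩ hb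
  · ext a
    constructor
    · rintro ⟨b, hbJ, hab⟩
      by_contra ha
      exact hFJ ⟨a, ha, hab⟩ hbJ
    · intro ha
      exact ⟨⊥, J.bot_mem, by rw [OminusAlgebra.ominus_bot]; exact ha⟩
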